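/- arXiv:2407.00920 — 4 statements merged into one kernel-verified Lean document; each statement's English description precedes it below -/
import Mathlib

section
/- Let α ∈ (1, 3/2) and let b ∈ ℕ satisfy b > 6/(α − 1/2). Then there exists β* ∈ (1/2, 3/4) such that for every β ∈ (1/2, β*] and every q ∈ ℕ₀: b(β/2 − 1/4) + b^q·(2 − β + b(−α/2 − 1/2 − β/2) + b²(β − 1/2)) < 0. Consequently, for every real a > 1, with λ_q = a^{(b^q)}, δ_q = λ₁^{2β−1}λ_q^{−2β}, l_{q+1} = λ_{q+1}^{−α}, and τ_{q+1} = (l_{q+1}^{−1/2}·λ_{q+2}^{1/2}·δ_{q+2}^{1/2}·λ_{q+1}^{1/2}·δ_{q+1}^{−1/4})^{−1}, one has τ_{q+1}·λ_q²·δ_q^{1/2} = a^{b(β/2−1/4) + b^q(2−β+b(−α/2−1/2−β/2)+b²(β−1/2))} < 1. -/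
/-- The convex-integration frequency parameter `λ_q = a^(b^q)`. -/
noncomputable def lamP (a : ℝ) (b : ℕ) (q : ℕ) : ℝ := a ^ ((b : ℝ) ^ q)

/-- The convex-integration amplitude parameter `δ_q = λ₁^(2β−1) λ_q^(−2β)`. -/
noncomputable def delP (a : ℝ) (b : ℕ) (β : ℝ) (q : ℕ) : ℝ :=
  lamP a b 1 ^ (2 * β - 1) * lamP a b q ^ (-(2 * β))

/-- The mollification scale `l_{q+1} = λ_{q+1}^{−α}`. -/
noncomputable def ellP (a : ℝ) (b : ℕ) (α : ℝ) (q : ℕ) : ℝ :=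
  lamP a b (q + 1) ^ (-α)

/-- The time step `τ_{q+1}`, defined by
`τ_{q+1}⁻¹ = l_{q+1}^{−1/2} λ_{q+2}^{1/2} δ_{q+2}^{1/2} λ_{q+1}^{1/2} δ_{q+1}^{−1/4}`. -/
noncomputable def tauP (a : ℝ) (b : ℕ) (α β : ℝ) (q : ℕ) : ℝ :=
  (ellP a b α q ^ (-(1/2) : ℝ) * lamP a b (q + 2) ^ ((1/2) : ℝ)
    * delP a b β (q + 2) ^ ((1/2) : ℝ) * lamP a b (q + 1) ^ ((1/2) : ℝ)
    * delP a b β (q + 1) ^ (-(1/4) : ℝ))⁻¹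

/-- For `α ∈ (1, 3/2)` and `b > 6/(α − 1/2)` there is `β* ∈ (1/2, 3/4)` such that
for all `β ∈ (1/2, β*]` and `q`, the exponent
`b(β/2 − 1/4) + b^q(2 − β + b(−α/2 − 1/2 − β/2) + b²(β − 1/2))` is negative, and
consequently `τ_{q+1} λ_q² δ_q^{1/2} = a^{exponent} < 1` for every `a > 1`. -/
theorem stmt9 (α : ℝ) (hα : α ∈ Set.Ioo (1 : ℝ) (3/2)) (b : ℕ)
    (hb : 6 / (α - 1/2) < (b : ℝ)) :
    ∃ βstar ∈ Set.Ioo (1/2 : ℝ) (3/4),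
      ∀ β ∈ Set.Ioc (1/2 : ℝ) βstar, ∀ q : ℕ,
        (b : ℝ) * (β/2 - 1/4)
            + (b : ℝ) ^ q * (2 - β + (b : ℝ) * (-α/2 - 1/2 - β/2)
              + (b : ℝ) ^ 2 * (β - 1/2)) < 0 ∧
        ∀ a : ℝ, 1 < a →
          tauP a b α β q * lamP a b q ^ 2 * delP a b β q ^ ((1 : ℝ)/2)
              = a ^ ((b : ℝ) * (β/2 - 1/4)
                  + (b : ℝ) ^ q * (2 - β + (b : ℝ) * (-α/2 - 1/2 - β/2)
                    + (b : ℝ) ^ 2 * (β - 1/2))) ∧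
            a ^ ((b : ℝ) * (β/2 - 1/4)
                  + (b : ℝ) ^ q * (2 - β + (b : ℝ) * (-α/2 - 1/2 - β/2)
                    + (b : ℝ) ^ 2 * (β - 1/2))) < 1 := by
  obtain ⟨hα1, hα2⟩ := hα
  have hαh : (0:ℝ) < α - 1/2 := by linarith
  have hb6 : (6:ℝ) < (b:ℝ) := lt_trans (by
    rw [lt_div_iff₀ hαh]; nlinarith) hb
  have hbα : 6 < (b:ℝ) * (α - 1/2) := by
    rw [div_lt_iff₀ hαh] at hb; linarith
  have hpos : (0:ℝ) < 1/(2*(b:ℝ)^2) := by positivity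
  have hsm : 1/(2*(b:ℝ)^2) < 1/4 := by
    rw [div_lt_div_iff₀ (by positivity) (by norm_num)]; nlinarith
  refine ⟨1/2 + 1/(2*(b:ℝ)^2), ⟨by linarith, by linarith⟩, ?_⟩
  rintro β ⟨hβ1, hβ2⟩ q
  set E := (b : ℝ) * (β/2 - 1/4)
      + (b : ℝ) ^ q * (2 - β + (b : ℝ) * (-α/2 - 1/2 - β/2)
        + (b : ℝ) ^ 2 * (β - 1/2)) with hE
  have hB1 : (1:ℝ) ≤ (b:ℝ) ^ q := one_le_pow₀ (by linarith)
  have hεb : (β - 1/2) * (2*(b:ℝ)^2) ≤ 1 := by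
    rw [← le_div_iff₀ (by positivity)]; linarith
  have hEneg : E < 0 := by
    rw [hE]
    have hC : 2 - β + (b : ℝ) * (-α/2 - 1/2 - β/2) + (b : ℝ) ^ 2 * (β - 1/2)
        ≤ -1 - (b:ℝ) := by nlinarith
    nlinarith [mul_le_mul_of_nonneg_left hC (le_trans zero_le_one hB1),
      mul_le_mul_of_nonneg_right hB1 (show (0:ℝ) ≤ 1 + (b:ℝ) by linarith)]
  refine ⟨hEneg, fun a ha => ⟨?_, Real.rpow_lt_one_of_one_lt_of_neg ha hEneg⟩⟩
  have ha0 : (0:ℝ) < a := lt_trans one_pos ha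
  rw [show (lamP a b q ^ 2 : ℝ) = lamP a b q ^ ((2:ℕ):ℝ) from (Real.rpow_natCast _ 2).symm]
  simp only [tauP, ellP, delP, lamP, ← Real.rpow_natCast, ← Real.rpow_mul ha0.le,
    ← Real.rpow_add ha0, Real.mul_rpow (Real.rpow_nonneg ha0.le _) (Real.rpow_nonneg ha0.le _),
    ← Real.rpow_neg ha0.le]
  congr 1
  simp only [Real.rpow_natCast]
  push_cast
  ring
end

section
/- Let α ∈ (1, 3/2) and let b ∈ ℕ satisfy b > 6/(α − 1/2). Then there exists β* ∈ (1/2, 3/4) such that for every β ∈ (1/2, β*] and every q ∈ ℕ₀: b(1/4 − β/2) + b^{q+1}·(α/2 − β/2 − 1/2 + b(β − 1/2)) < b(2β − 1) + b^{q+2}·(1 − 2β). Consequently, for every real a > 1, with λ_q = a^{(b^q)}, δ_q = λ₁^{2β−1}λ_q^{−2β}, l_{q+1} = λ_{q+1}^{−α}, and τ_{q+1} = (l_{q+1}^{−1/2}·λ_{q+2}^{1/2}·δ_{q+2}^{1/2}·λ_{q+1}^{1/2}·δ_{q+1}^{−1/4})^{−1}, one has τ_{q+1}·l_{q+1}^{−1}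 < λ_{q+2}·δ_{q+2}. -/
/-- For `α ∈ (1, 3/2)` and `b > 6/(α − 1/2)` there is `β* ∈ (1/2, 3/4)` such that
for all `β ∈ (1/2, β*]` and `q`,
`b(1/4 − β/2) + b^{q+1}(α/2 − β/2 − 1/2 + b(β − 1/2)) < b(2β − 1) + b^{q+2}(1 − 2β)`,
and consequently `τ_{q+1} l_{q+1}^{−1} < λ_{q+2} δ_{q+2}` for every `a > 1`. -/
theorem stmt10 (α : ℝ) (hα : α ∈ Set.Ioo (1 : ℝ) (3/2)) (b : ℕ)
    (hb : 6 / (α - 1/2) < (b : ℝ)) :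
    ∃ βstar ∈ Set.Ioo (1/2 : ℝ) (3/4),
      ∀ β ∈ Set.Ioc (1/2 : ℝ) βstar, ∀ q : ℕ,
        (b : ℝ) * (1/4 - β/2)
            + (b : ℝ) ^ (q + 1) * (α/2 - β/2 - 1/2 + (b : ℝ) * (β - 1/2))
          < (b : ℝ) * (2 * β - 1) + (b : ℝ) ^ (q + 2) * (1 - 2 * β) ∧
        ∀ a : ℝ, 1 < a →
          tauP a b α β q * (ellP a b α q)⁻¹
            < lamP a b (q + 2) * delP a b β (q + 2) := by
  obtain ⟨hα1, hα2⟩ := hα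
  have hα12 : (1:ℝ)/2 < α - 1/2 := by linarith
  have h6 : (6:ℝ) < 6 / (α - 1/2) := by
    rw [lt_div_iff₀ (by linarith)]; nlinarith
  have hb6 : (6:ℝ) < b := lt_trans h6 hb
  have hbpos : (0:ℝ) < b := by linarith
  have hd : (0:ℝ) < (3/2 - α) / (12 * b) := div_pos (by linarith) (by positivity)
  refine ⟨1/2 + (3/2 - α) / (12 * b), ⟨by linarith, ?_⟩, ?_⟩
  · have : (3/2 - α) / (12 * b) < 1/4 := by
      rw [div_lt_iff₀ (by positivity)]; nlinarith
    linarith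
  intro β hβ q
  obtain ⟨hβ1, hβ2⟩ := hβ
  have hε : β - 1/2 ≤ (3/2 - α) / (12 * b) := by linarith
  have hε' : (12:ℝ) * b * (β - 1/2) ≤ 3/2 - α := by
    rw [le_div_iff₀ (by positivity)] at hε; nlinarith
  have hbr : 3 * (b:ℝ) * (β - 1/2) + (α - β - 1)/2 < 0 := by nlinarith
  have hbq : (0:ℝ) < (b:ℝ) ^ (q + 1) := by positivity
  have hmain : (b : ℝ) * (1/4 - β/2)
            + (b : ℝ) ^ (q + 1) * (α/2 - β/2 - 1/2 + (b : ℝ) * (β - 1/2))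
          < (b : ℝ) * (2 * β - 1) + (b : ℝ) ^ (q + 2) * (1 - 2 * β) := by
    have hp2 : ((b:ℝ)) ^ (q + 2) = (b:ℝ) ^ (q + 1) * b := by ring
    rw [hp2]
    nlinarith [mul_pos hbq (by linarith : (0:ℝ) < -(3 * (b:ℝ) * (β - 1/2) + (α - β - 1)/2)),
      mul_pos hbpos (by linarith : (0:ℝ) < β - 1/2)]
  refine ⟨hmain, ?_⟩
  intro a ha
  have ha0 : (0:ℝ) < a := by linarith
  have hmul : ∀ x y : ℝ, a ^ x * a ^ y = a ^ (x + y) := fun x y => (Real.rpow_add ha0 x y).symm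
  have hpow : ∀ x y : ℝ, (a ^ x) ^ y = a ^ (x * y) := fun x y => (Real.rpow_mul ha0.le x y).symm
  have hinv : ∀ x : ℝ, (a ^ x)⁻¹ = a ^ (-x) := fun x => (Real.rpow_neg ha0.le x).symm
  simp only [tauP, ellP, delP, lamP, hmul, hpow, hinv]
  rw [Real.rpow_lt_rpow_left_iff ha]
  ring_nf
  ring_nf at hmain
  nlinarith [hmain]
end

section
/- Let α ∈ (1, 3/2) and let b ∈ ℕ satisfy b > 6/(α − 1/2). Then there exists β* ∈ (1/2, 3/4) such that for every β ∈ (1/2, β*] and every q ∈ ℕ₀: b(β/2 − 1/4) + b^q·(1 − β + b(1/2 − α/2 − β/2) + b²(β − 1/2)) < 0. Consequently, for every real a > 1, with λ_q = a^{(b^q)}, δ_q = λ₁^{2β−1}λ_q^{−2β}, l_{q+1} = λ_{q+1}^{−α}, and τ_{q+1} = (l_{q+1}^{−1/2}·λ_{q+2}^{1/2}·δ_{q+2}^{1/2}·λ_{q+1}^{1/2}·δ_{q+1}^{−1/4})^{−1}, one has λ_{q+1}·τ_{q+1}·λ_q·δ_q^{1/2} = a^{b(β/2−1/4) + b^q(1−β+b(1/2−α/2−β/2)+b²(β−1/2))}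 < 1. -/
/-- For `α ∈ (1, 3/2)` and `b > 6/(α − 1/2)` there is `β* ∈ (1/2, 3/4)` such that
for all `β ∈ (1/2, β*]` and `q`, the exponent
`b(β/2 − 1/4) + b^q(1 − β + b(1/2 − α/2 − β/2) + b²(β − 1/2))` is negative, and
consequently `λ_{q+1} τ_{q+1} λ_q δ_q^{1/2} = a^{exponent} < 1` for every `a > 1`. -/
theorem stmt13 (α : ℝ) (hα : α ∈ Set.Ioo (1 : ℝ) (3/2)) (b : ℕ)
    (hb : 6 / (α - 1/2) < (b : ℝ)) :
    ∃ βstar ∈ Set.Ioo (1/2 : ℝ) (3/4),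
      ∀ β ∈ Set.Ioc (1/2 : ℝ) βstar, ∀ q : ℕ,
        (b : ℝ) * (β/2 - 1/4)
            + (b : ℝ) ^ q * (1 - β + (b : ℝ) * (1/2 - α/2 - β/2)
              + (b : ℝ) ^ 2 * (β - 1/2)) < 0 ∧
        ∀ a : ℝ, 1 < a →
          lamP a b (q + 1) * tauP a b α β q * lamP a b q * delP a b β q ^ ((1 : ℝ)/2)
              = a ^ ((b : ℝ) * (β/2 - 1/4)
                  + (b : ℝ) ^ q * (1 - β + (b : ℝ) * (1/2 - α/2 - β/2)
                    + (b : ℝ) ^ 2 * (β - 1/2))) ∧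
            a ^ ((b : ℝ) * (β/2 - 1/4)
                  + (b : ℝ) ^ q * (1 - β + (b : ℝ) * (1/2 - α/2 - β/2)
                    + (b : ℝ) ^ 2 * (β - 1/2))) < 1 := by

  obtain ⟨hα1, hα2⟩ := hα
  have hα' : (0:ℝ) < α - 1/2 := by linarith
  have hb' : (6:ℝ) < (b : ℝ) * (α - 1/2) := by
    rw [div_lt_iff₀ hα'] at hb; linarith
  have hb6 : (6:ℝ) < (b : ℝ) := by nlinarith
  have hS : (0:ℝ) < (b : ℝ)^2 - 1 := by nlinarith
  set S : ℝ := (b : ℝ)^2 - 1 with hSdef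
  have hmin : 0 < min (1/8 : ℝ) (5/(4*S)) := lt_min (by norm_num) (by positivity)
  refine ⟨1/2 + min (1/8 : ℝ) (5/(4*S)), ⟨by linarith, ?_⟩, ?_⟩
  · have := min_le_left (1/8 : ℝ) (5/(4*S)); linarith
  intro β hβ q
  obtain ⟨hβ1, hβ2⟩ := hβ
  have hε0 : 0 < β - 1/2 := by linarith
  have hεle : β - 1/2 ≤ 5/(4*S) := by
    have := min_le_right (1/8 : ℝ) (5/(4*S)); linarith
  have hεS : (β - 1/2) * S ≤ 5/4 := by
    have h1 : (β - 1/2) * S ≤ (5/(4*S)) * S :=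
      mul_le_mul_of_nonneg_right hεle hS.le
    have h2 : (5/(4*S)) * S = 5/4 := by field_simp
    linarith
  have hC0 : 1/2 + (b : ℝ)*(1/4 - α/2) ≤ -5/2 := by nlinarith
  have hq1 : (1:ℝ) ≤ (b : ℝ)^q := one_le_pow₀ (by linarith)
  have key : (1/2 + (b : ℝ)*(1/4 - α/2)) + (β - 1/2) * S ≤ -5/4 := by linarith
  have hE : (b : ℝ) * (β/2 - 1/4)
      + (b : ℝ) ^ q * (1 - β + (b : ℝ) * (1/2 - α/2 - β/2)
        + (b : ℝ) ^ 2 * (β - 1/2)) < 0 := by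
    have heq : (b : ℝ) * (β/2 - 1/4)
        + (b : ℝ) ^ q * (1 - β + (b : ℝ) * (1/2 - α/2 - β/2)
          + (b : ℝ) ^ 2 * (β - 1/2))
        = (b : ℝ)^q * ((1/2 + (b : ℝ)*(1/4 - α/2)) + (β - 1/2) * S)
          - ((b : ℝ)^q - 1) * ((b : ℝ) * (β - 1/2) / 2) := by
      rw [hSdef]; ring
    rw [heq]
    have h3 : (0:ℝ) ≤ ((b : ℝ)^q - 1) * ((b : ℝ) * (β - 1/2) / 2) := by
      apply mul_nonneg (by linarith); positivity
    nlinarith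
  refine ⟨hE, fun a ha => ?_⟩
  have ha0 : (0:ℝ) < a := by linarith
  have k1 : ∀ x y : ℝ, a ^ x * a ^ y = a ^ (x + y) := fun x y =>
    (Real.rpow_add ha0 x y).symm
  have k2 : ∀ x y : ℝ, (a ^ x) ^ y = a ^ (x * y) := fun x y =>
    (Real.rpow_mul ha0.le x y).symm
  have k3 : ∀ x : ℝ, (a ^ x)⁻¹ = a ^ (-x) := fun x =>
    (Real.rpow_neg ha0.le x).symm
  constructor
  · simp only [lamP, delP, ellP, tauP, mul_inv, k2, k1, k3]
    congr 1
    ring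
  · exact Real.rpow_lt_one_of_one_lt_of_neg ha hE
end

section
/- Let L > 1 be a real number, α ∈ (1, 3/2), and let b ∈ ℕ satisfy b·(α − 1/2) > 6L. Then there exists β* ∈ (1/2, 3/4) such that for every β ∈ (1/2, β*] and every q ∈ ℕ₀: L^{1/4} + b(β − 1/2) + b^q·(2 − 2β + b(β − α)) < 0. Consequently, for every real a > 1, a^{L^{1/4}}·a^{b(β−1/2)}·a^{b^q(2−2β+b(β−α))} < 1. -/
/-- For `L > 1`, `α ∈ (1, 3/2)` and `b(α − 1/2) > 6L` there is `β* ∈ (1/2, 3/4)`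
such that for all `β ∈ (1/2, β*]` and `q`,
`L^{1/4} + b(β − 1/2) + b^q(2 − 2β + b(β − α)) < 0`, and consequently
`a^{L^{1/4}} a^{b(β−1/2)} a^{b^q(2−2β+b(β−α))} < 1` for every `a > 1`. -/
theorem stmt14 (L : ℝ) (hL : 1 < L) (α : ℝ) (hα : α ∈ Set.Ioo (1 : ℝ) (3/2))
    (b : ℕ) (hb : 6 * L < (b : ℝ) * (α - 1/2)) :
    ∃ βstar ∈ Set.Ioo (1/2 : ℝ) (3/4),
      ∀ β ∈ Set.Ioc (1/2 : ℝ) βstar, ∀ q : ℕ,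
        L ^ ((1 : ℝ)/4) + (b : ℝ) * (β - 1/2)
            + (b : ℝ) ^ q * (2 - 2 * β + (b : ℝ) * (β - α)) < 0 ∧
        ∀ a : ℝ, 1 < a →
          a ^ (L ^ ((1 : ℝ)/4)) * a ^ ((b : ℝ) * (β - 1/2))
              * a ^ ((b : ℝ) ^ q * (2 - 2 * β + (b : ℝ) * (β - α))) < 1 := by
  obtain ⟨hα1, hα2⟩ := hα
  have hb0 : 0 < (b : ℝ) := by
    by_contra h
    push_neg at h
    nlinarith
  have hb1 : (1 : ℝ) ≤ (b : ℝ) := by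
    exact_mod_cast Nat.one_le_cast.mpr (Nat.pos_of_ne_zero (by
      intro h; rw [h] at hb0; simp at hb0))
  refine ⟨1/2 + min (1/8 : ℝ) (L / b), ⟨?_, ?_⟩, ?_⟩
  · have : (0 : ℝ) < min (1/8 : ℝ) (L / b) :=
      lt_min (by norm_num) (div_pos (by linarith) hb0)
    linarith
  · have : min (1/8 : ℝ) (L / b) ≤ 1/8 := min_le_left _ _
    linarith
  intro β hβ q
  obtain ⟨hβ1, hβ2⟩ := hβ
  have htb : (b : ℝ) * (β - 1/2) ≤ L := by
    have h1 : β - 1/2 ≤ L / b := by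
      have := min_le_right (1/8 : ℝ) (L / b); linarith
    calc (b : ℝ) * (β - 1/2) ≤ (b : ℝ) * (L / b) := by
          exact mul_le_mul_of_nonneg_left h1 hb0.le
      _ = L := by field_simp
  have hE : 2 - 2 * β + (b : ℝ) * (β - α) < 0 := by nlinarith
  have hpq : (1 : ℝ) ≤ (b : ℝ) ^ q := one_le_pow₀ hb1
  have hmul : (b : ℝ) ^ q * (2 - 2 * β + (b : ℝ) * (β - α)) ≤
      1 * (2 - 2 * β + (b : ℝ) * (β - α)) :=
    mul_le_mul_of_nonpos_right hpq hE.le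
  have hL4 : L ^ ((1 : ℝ)/4) ≤ L := by
    calc L ^ ((1 : ℝ)/4) ≤ L ^ (1 : ℝ) :=
          Real.rpow_le_rpow_of_exponent_le hL.le (by norm_num)
      _ = L := Real.rpow_one L
  have hmain : L ^ ((1 : ℝ)/4) + (b : ℝ) * (β - 1/2)
      + (b : ℝ) ^ q * (2 - 2 * β + (b : ℝ) * (β - α)) < 0 := by nlinarith
  refine ⟨hmain, fun a ha => ?_⟩
  rw [← Real.rpow_add (by linarith), ← Real.rpow_add (by linarith)]
  exact Real.rpow_lt_one_of_one_lt_of_neg ha hmain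
end
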